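/- Let t0 < T, θ ∈ (0,1), 0 < μ < 1, γ > 0, b > 0, r > 0, L > 0 and x0 ∈ ℝ with |x0| ≤ L. Set A = r(1 + 2L). If C1(T,A) < 1, then there is at most one continuous function x : [t0,T] → [−L, L] satisfying the integral equation x(t) = x0 + (I^{θ,μ,γ}(r x(·)(1 − x(·))))(t) for all t ∈ [t0,T] (the integral-equation form of the generalized ABC quadratic logistic model with right-hand side f(x) = r x (1 − x)). -/

import Mathlib

open Real MeasureTheory Set

/-- Generalized binomial coefficient `C(γ, i) = γ(γ-1)⋯(γ-i+1)/i!`. -/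
noncomputable def genBinom (γ : ℝ) (i : ℕ) : ℝ :=
  (∏ j ∈ Finset.range i, (γ - j)) / (Nat.factorial i : ℝ)

/-- Rising factorial `(ρ)_k = ρ(ρ+1)⋯(ρ+k-1)`. -/
noncomputable def risingFac (ρ : ℝ) (k : ℕ) : ℝ :=
  ∏ j ∈ Finset.range k, (ρ + j)

/-- Generalized Mittag-Leffler function `E_{θ,β}^ρ(λ, z)`
(terms with `Γ` at a pole vanish since `Real.Gamma` is `0` there). -/
noncomputable def mittagLeffler (θ β ρ lam z : ℝ) : ℝ :=
  ∑' k : ℕ, lam ^ k * z ^ ((k : ℝ) * θ + β - 1) * risingFac ρ k /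
    (Real.Gamma ((k : ℝ) * θ + β) * (Nat.factorial k : ℝ))

/-- Generalized AB fractional integral `(I^{θ,μ,γ} η)(t)` starting at `t0`,
with normalization constant `b = B(θ) > 0`. -/
noncomputable def ABIntegral (t0 b θ μ γ : ℝ) (η : ℝ → ℝ) (t : ℝ) : ℝ :=
  ∑' i : ℕ, genBinom γ i * θ ^ i /
      (b * (1 - θ) ^ ((i : ℝ) - 1) * Real.Gamma ((i : ℝ) * θ + 1 - μ)) *
    ∫ s in t0..t, (t - s) ^ ((i : ℝ) * θ - μ) * η s

/-- Generalized ABC fractional derivative `(D^{θ,μ,γ} f)(t)` starting at `t0`,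
with `λ = -θ/(1-θ)` and normalization constant `b = B(θ) > 0`. -/
noncomputable def ABCDeriv (t0 b θ μ γ : ℝ) (f : ℝ → ℝ) (t : ℝ) : ℝ :=
  (b / (1 - θ)) * ∫ s in t0..t, mittagLeffler θ μ γ (-θ / (1 - θ)) (t - s) * deriv f s

/-- Generalized ABR fractional derivative `(R^{θ,μ,γ} f)(t)` starting at `t0`. -/
noncomputable def ABRDeriv (t0 b θ μ γ : ℝ) (f : ℝ → ℝ) (t : ℝ) : ℝ :=
  (b / (1 - θ)) *
    deriv (fun u => ∫ s in t0..u, mittagLeffler θ μ γ (-θ / (1 - θ)) (u - s) * f s) t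

/-- The contraction constant `C1(T, A)` (case `μ ≠ 1`). -/
noncomputable def C1const (t0 T b θ μ γ A : ℝ) : ℝ :=
  (A / b) * ∑' i : ℕ, |genBinom γ i| * θ ^ i * (T - t0) ^ ((i : ℝ) * θ + 1 - μ) /
    ((1 - θ) ^ ((i : ℝ) - 1) * Real.Gamma ((i : ℝ) * θ + 2 - μ))

/-- The contraction constant `C2(T, A)` (case `μ = 1`). -/
noncomputable def C2const (t0 T b θ γ A : ℝ) : ℝ :=
  (A / b) * ((1 - θ) +
    ∑' i : ℕ, |genBinom γ (i + 1)| * θ ^ (i + 1) * (T - t0) ^ (((i : ℝ) + 1) * θ) /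
      ((1 - θ) ^ (i : ℕ) * Real.Gamma (((i : ℝ) + 1) * θ + 1)))

/-- The operator `Υ` in the case `μ = 1`, whose `i = 0` term reduces to `((1-θ)/b) f(t, x(t))`. -/
noncomputable def UpsilonMuOne (t0 b θ γ x0 : ℝ) (f : ℝ → ℝ → ℝ) (x : ℝ → ℝ) (t : ℝ) : ℝ :=
  x0 + ((1 - θ) / b) * f t (x t) +
    ∑' i : ℕ, genBinom γ (i + 1) * θ ^ (i + 1) /
        (b * (1 - θ) ^ (i : ℕ) * Real.Gamma (((i : ℝ) + 1) * θ)) *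
      ∫ s in t0..t, (t - s) ^ (((i : ℝ) + 1) * θ - 1) * f s (x s)

/-!
Both solutions are fixed points of `x ↦ x0 + I^{θ,μ,γ}(f ∘ x)`, `f u = r u (1 - u)`, and `f` is
Lipschitz on `[-L, L]` with constant `A = r (1 + 2L)` because `f u - f v = r (u - v)(1 - u - v)`.
Since `∫_{t0}^t (t - s)^{iθ-μ} ds = (t - t0)^{iθ+1-μ} / (iθ+1-μ)` and
`(iθ+1-μ) Γ(iθ+1-μ) = Γ(iθ+2-μ)`, the AB integral of a function bounded by `C` is bounded by
`C1(T, C)`, term by term. So the sup distance `M` of two solutions satisfies `M ≤ C1(T, A) M`,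
whence `M = 0`. The series `C1` converges because `|C(γ,i)| ≤ (|γ|+1)^i` while, by the
log-convexity of `Γ`, `Γ(iθ+c)` outgrows every geometric sequence.
-/

open scoped NNReal

namespace Real

theorem Gamma_add_one_sub_mul_rpow_le {x θ : ℝ} (hx : 0 < x) (hθ0 : 0 < θ) (hθ1 : θ < 1) :
    Gamma (x + 1 - θ) * x ^ θ ≤ Gamma (x + 1) := by
  have hx1 : 0 < x + 1 := by linarith
  have hconv := Gamma_mul_add_mul_le_rpow_Gamma_mul_rpow_Gamma hx hx1 hθ0 (sub_pos.2 hθ1)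
    (add_sub_cancel θ 1)
  have hΓx : Gamma x = Gamma (x + 1) / x := by rw [Gamma_add_one hx.ne']; field_simp
  calc Gamma (x + 1 - θ) * x ^ θ ≤ Gamma x ^ θ * Gamma (x + 1) ^ (1 - θ) * x ^ θ := by
        rw [show x + 1 - θ = θ * x + (1 - θ) * (x + 1) by ring]
        gcongr
    _ = Gamma (x + 1) := by
        rw [hΓx, div_rpow (by positivity) hx.le, div_mul_eq_mul_div, div_mul_cancel₀ _
          (by positivity), ← rpow_add (Gamma_pos_of_pos hx1), add_sub_cancel, rpow_one]

theorem summable_pow_div_Gamma_mul_add {θ c : ℝ} (Q : ℝ) (hθ0 : 0 < θ) (hθ1 : θ < 1)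
    (hc : 1 ≤ c) : Summable fun i : ℕ => Q ^ i / Gamma (i * θ + c) := by
  refine summable_of_ratio_norm_eventually_le (r := 1 / 2) (by norm_num) ?_
  have hgrowth : Filter.Tendsto (fun n : ℕ => ((n : ℝ) * θ + (c + θ - 1)) ^ θ)
      Filter.atTop Filter.atTop :=
    (tendsto_rpow_atTop hθ0).comp (Filter.tendsto_atTop_add_const_right _ _
      (tendsto_natCast_atTop_atTop.atTop_mul_const hθ0))
  filter_upwards [hgrowth.eventually_ge_atTop (2 * |Q|)] with n hn
  have hnθ : 0 ≤ (n : ℝ) * θ := by positivity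
  have hG : 0 < Gamma (n * θ + c) := Gamma_pos_of_pos (by linarith)
  have hG' : 0 < Gamma ((n + 1 : ℕ) * θ + c) := Gamma_pos_of_pos (by push_cast; nlinarith)
  have hratio : Gamma (n * θ + c) * ((n : ℝ) * θ + (c + θ - 1)) ^ θ ≤
      Gamma ((n + 1 : ℕ) * θ + c) := by
    have h := Gamma_add_one_sub_mul_rpow_le (x := n * θ + (c + θ - 1)) (by linarith) hθ0 hθ1
    rwa [show (n : ℝ) * θ + (c + θ - 1) + 1 - θ = n * θ + c by ring,
      show (n : ℝ) * θ + (c + θ - 1) + 1 = (n + 1 : ℕ) * θ + c by push_cast; ring] at h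
  rw [norm_div, norm_div, norm_pow, norm_pow, Real.norm_eq_abs, Real.norm_of_nonneg hG.le,
    Real.norm_of_nonneg hG'.le, div_le_iff₀ hG']
  calc |Q| ^ (n + 1) = 1 / 2 * (|Q| ^ n / Gamma (n * θ + c)) * (Gamma (n * θ + c) * (2 * |Q|)) := by
        field_simp; ring
    _ ≤ 1 / 2 * (|Q| ^ n / Gamma (n * θ + c)) * Gamma ((n + 1 : ℕ) * θ + c) := by
        gcongr
        exact (mul_le_mul_of_nonneg_left hn hG.le).trans hratio

end Real

theorem abs_genBinom_le (γ : ℝ) (i : ℕ) : |genBinom γ i| ≤ (|γ| + 1) ^ i := by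
  have hfac : (0 : ℝ) < i.factorial := by exact_mod_cast i.factorial_pos
  rw [genBinom, abs_div, Nat.abs_cast, div_le_iff₀ hfac]
  calc |∏ j ∈ Finset.range i, (γ - j)| = ∏ j ∈ Finset.range i, |γ - j| := Finset.abs_prod _ _
    _ ≤ ∏ j ∈ Finset.range i, (|γ| + 1) * ((j : ℝ) + 1) := by
        gcongr with j
        have hj : (0 : ℝ) ≤ j := j.cast_nonneg
        calc |γ - j| ≤ |γ| + j := by simpa using abs_sub γ (j : ℝ)
          _ ≤ (|γ| + 1) * (j + 1) := by nlinarith [abs_nonneg γ]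
    _ = (|γ| + 1) ^ i * i.factorial := by
        rw [Finset.prod_mul_distrib, Finset.prod_const, Finset.card_range]
        congr 1
        exact_mod_cast Finset.prod_range_add_one_eq_factorial i

section RiemannLiouvilleKernel

variable {t0 t p : ℝ}

theorem intervalIntegrable_sub_rpow (hp : -1 < p) :
    IntervalIntegrable (fun s => (t - s) ^ p) volume t0 t := by
  simpa using ((intervalIntegral.intervalIntegrable_rpow' hp (a := 0) (b := t - t0)).comp_sub_left
    t).symm

theorem integral_sub_rpow (hp : -1 < p) :
    ∫ s in t0..t, (t - s) ^ p = (t - t0) ^ (p + 1) / (p + 1) := by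
  rw [intervalIntegral.integral_comp_sub_left (fun x : ℝ => x ^ p) t, sub_self,
    integral_rpow (Or.inl hp), zero_rpow (by linarith), sub_zero]

theorem abs_integral_sub_rpow_mul_le {C : ℝ} {η : ℝ → ℝ} (ht : t0 ≤ t) (hp : -1 < p)
    (hC : ∀ s ∈ Icc t0 t, |η s| ≤ C) :
    |∫ s in t0..t, (t - s) ^ p * η s| ≤ C * ((t - t0) ^ (p + 1) / (p + 1)) := by
  have hbound : ∀ s ∈ Ioc t0 t, ‖(t - s) ^ p * η s‖ ≤ (t - s) ^ p * C := fun s hs => by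
    have hts : 0 ≤ t - s := sub_nonneg.2 hs.2
    rw [Real.norm_eq_abs, abs_mul, abs_of_nonneg (rpow_nonneg hts p)]
    exact mul_le_mul_of_nonneg_left (hC s (Ioc_subset_Icc_self hs)) (rpow_nonneg hts p)
  calc |∫ s in t0..t, (t - s) ^ p * η s| ≤ ∫ s in t0..t, (t - s) ^ p * C :=
        intervalIntegral.norm_integral_le_of_norm_le ht (ae_of_all _ hbound)
          ((intervalIntegrable_sub_rpow hp).mul_const C)
    _ = C * ((t - t0) ^ (p + 1) / (p + 1)) := by
        rw [intervalIntegral.integral_mul_const, integral_sub_rpow hp, mul_comm]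

end RiemannLiouvilleKernel

noncomputable def ABIntegralTerm (t0 b θ μ γ : ℝ) (η : ℝ → ℝ) (t : ℝ) (i : ℕ) : ℝ :=
  genBinom γ i * θ ^ i / (b * (1 - θ) ^ ((i : ℝ) - 1) * Real.Gamma ((i : ℝ) * θ + 1 - μ)) *
    ∫ s in t0..t, (t - s) ^ ((i : ℝ) * θ - μ) * η s

noncomputable def C1Term (t0 T θ μ γ : ℝ) (i : ℕ) : ℝ :=
  |genBinom γ i| * θ ^ i * (T - t0) ^ ((i : ℝ) * θ + 1 - μ) /
    ((1 - θ) ^ ((i : ℝ) - 1) * Real.Gamma ((i : ℝ) * θ + 2 - μ))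

section ABIntegral

variable {t0 T b θ μ γ : ℝ}

theorem ABIntegral_eq_tsum (η : ℝ → ℝ) (t : ℝ) :
    ABIntegral t0 b θ μ γ η t = ∑' i, ABIntegralTerm t0 b θ μ γ η t i :=
  rfl

theorem C1const_mul (A M : ℝ) :
    C1const t0 T b θ μ γ (A * M) = C1const t0 T b θ μ γ A * M := by
  simp only [C1const]
  ring

theorem summable_C1Term (htT : t0 ≤ T) (hθ0 : 0 < θ) (hθ1 : θ < 1) (hμ1 : μ < 1) :
    Summable (C1Term t0 T θ μ γ) := by
  have h1θ : 0 < 1 - θ := sub_pos.2 hθ1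
  have hX : 0 ≤ T - t0 := sub_nonneg.2 htT
  set q := θ * (T - t0) ^ θ / (1 - θ)
  have hq : 0 ≤ q := by positivity
  have hΓ : ∀ i : ℕ, 0 < Gamma (i * θ + (2 - μ)) := fun i => Gamma_pos_of_pos (by
    have : 0 ≤ (i : ℝ) * θ := by positivity
    linarith)
  have hterm : ∀ i : ℕ, C1Term t0 T θ μ γ i =
      (T - t0) ^ (1 - μ) * (1 - θ) * (|genBinom γ i| * q ^ i / Gamma (i * θ + (2 - μ))) := by
    intro i
    have hiθ : 0 ≤ (i : ℝ) * θ := by positivity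
    rw [C1Term, show (i : ℝ) * θ + 1 - μ = θ * i + (1 - μ) by ring, rpow_add' hX (by linarith),
      rpow_mul hX, rpow_natCast, rpow_sub h1θ, rpow_one, rpow_natCast,
      show (i : ℝ) * θ + 2 - μ = i * θ + (2 - μ) by ring, div_pow, mul_pow]
    field_simp
  refine Summable.of_nonneg_of_le (fun i => ?_) (fun i => ?_)
    ((summable_pow_div_Gamma_mul_add (c := 2 - μ) ((|γ| + 1) * q) hθ0 hθ1 (by linarith)).mul_left
      ((T - t0) ^ (1 - μ) * (1 - θ)))
  · have := hΓ i
    rw [hterm]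
    positivity
  · have := hΓ i
    rw [hterm, mul_pow]
    gcongr
    exact abs_genBinom_le γ i

theorem abs_ABIntegralTerm_le (hθ0 : 0 < θ) (hθ1 : θ < 1) (hμ1 : μ < 1) (hb : 0 < b) {C : ℝ}
    {η : ℝ → ℝ} (hC : ∀ s ∈ Icc t0 T, |η s| ≤ C) {t : ℝ} (ht : t ∈ Icc t0 T) (i : ℕ) :
    |ABIntegralTerm t0 b θ μ γ η t i| ≤ C / b * C1Term t0 T θ μ γ i := by
  set p := (i : ℝ) * θ - μ
  have hp : -1 < p := by
    have : 0 ≤ (i : ℝ) * θ := by positivity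
    linarith
  have hC0 : 0 ≤ C := (abs_nonneg _).trans (hC t ht)
  have hden : 0 < b * (1 - θ) ^ ((i : ℝ) - 1) * Gamma ((i : ℝ) * θ + 1 - μ) := by
    have := rpow_pos_of_pos (sub_pos.2 hθ1) ((i : ℝ) - 1)
    have := Gamma_pos_of_pos (show 0 < (i : ℝ) * θ + 1 - μ by linarith)
    positivity
  have hΓ : Gamma ((i : ℝ) * θ + 2 - μ) = (p + 1) * Gamma ((i : ℝ) * θ + 1 - μ) := by
    rw [show (i : ℝ) * θ + 2 - μ = (i : ℝ) * θ + 1 - μ + 1 by ring, Gamma_add_one (by linarith)]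
    ring
  have hint := abs_integral_sub_rpow_mul_le ht.1 hp fun s hs => hC s ⟨hs.1, hs.2.trans ht.2⟩
  have hmono : (t - t0) ^ (p + 1) ≤ (T - t0) ^ (p + 1) :=
    rpow_le_rpow (sub_nonneg.2 ht.1) (by linarith [ht.2]) (by linarith)
  calc |ABIntegralTerm t0 b θ μ γ η t i|
      = |genBinom γ i| * θ ^ i / (b * (1 - θ) ^ ((i : ℝ) - 1) * Gamma ((i : ℝ) * θ + 1 - μ)) *
          |∫ s in t0..t, (t - s) ^ p * η s| := by
        rw [ABIntegralTerm, abs_mul, abs_div, abs_mul, abs_pow, abs_of_pos hθ0, abs_of_pos hden]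
    _ ≤ |genBinom γ i| * θ ^ i / (b * (1 - θ) ^ ((i : ℝ) - 1) * Gamma ((i : ℝ) * θ + 1 - μ)) *
          (C * ((T - t0) ^ (p + 1) / (p + 1))) := by
        gcongr
        exact hint.trans (by gcongr; linarith)
    _ = C / b * C1Term t0 T θ μ γ i := by
        rw [C1Term, hΓ, show (i : ℝ) * θ + 1 - μ = p + 1 by ring]
        field_simp

theorem summable_ABIntegralTerm (htT : t0 ≤ T) (hθ0 : 0 < θ) (hθ1 : θ < 1) (hμ1 : μ < 1)
    (hb : 0 < b) {η : ℝ → ℝ} (hη : ContinuousOn η (Icc t0 T)) {t : ℝ} (ht : t ∈ Icc t0 T) :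
    Summable (ABIntegralTerm t0 b θ μ γ η t) := by
  obtain ⟨C, hC⟩ := isCompact_Icc.exists_bound_of_continuousOn hη
  exact .of_norm_bounded ((summable_C1Term htT hθ0 hθ1 hμ1).mul_left (C / b))
    (abs_ABIntegralTerm_le hθ0 hθ1 hμ1 hb hC ht)

theorem ABIntegralTerm_sub (hθ0 : 0 ≤ θ) (hμ1 : μ < 1) {η₁ η₂ : ℝ → ℝ}
    (h₁ : ContinuousOn η₁ (Icc t0 T)) (h₂ : ContinuousOn η₂ (Icc t0 T)) {t : ℝ}
    (ht : t ∈ Icc t0 T) (i : ℕ) :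
    ABIntegralTerm t0 b θ μ γ (η₁ - η₂) t i =
      ABIntegralTerm t0 b θ μ γ η₁ t i - ABIntegralTerm t0 b θ μ γ η₂ t i := by
  have hp : -1 < (i : ℝ) * θ - μ := by
    have : 0 ≤ (i : ℝ) * θ := by positivity
    linarith
  have hsub : Icc t0 t ⊆ Icc t0 T := Icc_subset_Icc_right ht.2
  have hint : ∀ η : ℝ → ℝ, ContinuousOn η (Icc t0 T) →
      IntervalIntegrable (fun s => (t - s) ^ ((i : ℝ) * θ - μ) * η s) volume t0 t := fun η hη =>
    (intervalIntegrable_sub_rpow hp).mul_continuousOn (by rw [uIcc_of_le ht.1]; exact hη.mono hsub)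
  simp only [ABIntegralTerm, Pi.sub_apply, mul_sub,
    intervalIntegral.integral_sub (hint η₁ h₁) (hint η₂ h₂)]

theorem ABIntegral_sub (htT : t0 ≤ T) (hθ0 : 0 < θ) (hθ1 : θ < 1) (hμ1 : μ < 1) (hb : 0 < b)
    {η₁ η₂ : ℝ → ℝ} (h₁ : ContinuousOn η₁ (Icc t0 T)) (h₂ : ContinuousOn η₂ (Icc t0 T)) {t : ℝ}
    (ht : t ∈ Icc t0 T) :
    ABIntegral t0 b θ μ γ (η₁ - η₂) t =
      ABIntegral t0 b θ μ γ η₁ t - ABIntegral t0 b θ μ γ η₂ t := by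
  simp only [ABIntegral_eq_tsum, ABIntegralTerm_sub hθ0.le hμ1 h₁ h₂ ht]
  exact (summable_ABIntegralTerm htT hθ0 hθ1 hμ1 hb h₁ ht).tsum_sub
    (summable_ABIntegralTerm htT hθ0 hθ1 hμ1 hb h₂ ht)

theorem abs_ABIntegral_le (htT : t0 ≤ T) (hθ0 : 0 < θ) (hθ1 : θ < 1) (hμ1 : μ < 1) (hb : 0 < b)
    {C : ℝ} {η : ℝ → ℝ} (hC : ∀ s ∈ Icc t0 T, |η s| ≤ C) {t : ℝ} (ht : t ∈ Icc t0 T) :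
    |ABIntegral t0 b θ μ γ η t| ≤ C1const t0 T b θ μ γ C := by
  rw [ABIntegral_eq_tsum]
  exact tsum_of_norm_bounded (f := ABIntegralTerm t0 b θ μ γ η t)
    ((summable_C1Term htT hθ0 hθ1 hμ1).hasSum.mul_left (C / b))
    (abs_ABIntegralTerm_le hθ0 hθ1 hμ1 hb hC ht)

end ABIntegral

theorem lipschitzOnWith_logistic {r L : ℝ} (hr : 0 ≤ r) (hL : 0 ≤ L) :
    LipschitzOnWith ⟨r * (1 + 2 * L), by positivity⟩ (fun u => r * u * (1 - u)) (Icc (-L) L) := by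
  refine LipschitzOnWith.of_dist_le_mul fun u hu v hv => ?_
  have hsum : |1 - u - v| ≤ 1 + 2 * L :=
    abs_le.2 ⟨by linarith [hu.2, hv.2], by linarith [hu.1, hv.1]⟩
  calc dist (r * u * (1 - u)) (r * v * (1 - v)) = r * |1 - u - v| * |u - v| := by
        rw [Real.dist_eq,
          show r * u * (1 - u) - r * v * (1 - v) = r * (1 - u - v) * (u - v) by ring, abs_mul, abs_mul, abs_of_nonneg hr]
    _ ≤ r * (1 + 2 * L) * dist u v := by
        rw [Real.dist_eq]
        gcongr

theorem eqOn_of_eq_add_ABIntegral {t0 T b θ μ γ x0 : ℝ} {K : ℝ≥0} {f : ℝ → ℝ} {S : Set ℝ}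
    {x₁ x₂ : ℝ → ℝ} (htT : t0 ≤ T) (hθ0 : 0 < θ) (hθ1 : θ < 1) (hμ1 : μ < 1) (hb : 0 < b)
    (hf : LipschitzOnWith K f S) (hK : C1const t0 T b θ μ γ K < 1)
    (h₁c : ContinuousOn x₁ (Icc t0 T)) (h₂c : ContinuousOn x₂ (Icc t0 T))
    (h₁m : MapsTo x₁ (Icc t0 T) S) (h₂m : MapsTo x₂ (Icc t0 T) S)
    (h₁e : ∀ t ∈ Icc t0 T, x₁ t = x0 + ABIntegral t0 b θ μ γ (fun s => f (x₁ s)) t)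
    (h₂e : ∀ t ∈ Icc t0 T, x₂ t = x0 + ABIntegral t0 b θ μ γ (fun s => f (x₂ s)) t) :
    EqOn x₁ x₂ (Icc t0 T) := by
  obtain ⟨tm, htm, hmax⟩ := isCompact_Icc.exists_isMaxOn (nonempty_Icc.2 htT)
    (h₁c.sub h₂c).abs
  set M := |x₁ tm - x₂ tm|
  have hle : ∀ t ∈ Icc t0 T, |x₁ t - x₂ t| ≤ M := fun t ht => isMaxOn_iff.1 hmax t ht
  have hdiff : ∀ s ∈ Icc t0 T, |f (x₁ s) - f (x₂ s)| ≤ K * M := fun s hs =>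
    (hf.dist_le_mul _ (h₁m hs) _ (h₂m hs)).trans (by gcongr; exact hle s hs)
  have h₁f : ContinuousOn (fun s => f (x₁ s)) (Icc t0 T) := hf.continuousOn.comp h₁c h₁m
  have h₂f : ContinuousOn (fun s => f (x₂ s)) (Icc t0 T) := hf.continuousOn.comp h₂c h₂m
  have hcontr : M ≤ C1const t0 T b θ μ γ K * M :=
    calc M = |ABIntegral t0 b θ μ γ ((fun s => f (x₁ s)) - fun s => f (x₂ s)) tm| := by
          rw [ABIntegral_sub htT hθ0 hθ1 hμ1 hb h₁f h₂f htm, ← add_sub_add_left_eq_sub _ _ x0,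
            ← h₁e tm htm, ← h₂e tm htm]
      _ ≤ C1const t0 T b θ μ γ (K * M) := abs_ABIntegral_le htT hθ0 hθ1 hμ1 hb hdiff htm
      _ = C1const t0 T b θ μ γ K * M := C1const_mul _ _
  have hM : M ≤ 0 := by nlinarith [abs_nonneg (x₁ tm - x₂ tm)]
  exact fun t ht => sub_eq_zero.1 (abs_nonpos_iff.1 ((hle t ht).trans hM))

theorem quadratic_logistic_uniqueness_general
    (t0 T θ μ γ b r L x0 : ℝ) (htT : t0 < T) (hθ0 : 0 < θ) (hθ1 : θ < 1)
    (hμ1 : μ < 1) (hb : 0 < b) (hr : 0 < r) (hL : 0 < L)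
    (hC1 : C1const t0 T b θ μ γ (r * (1 + 2 * L)) < 1)
    (x1 x2 : ℝ → ℝ)
    (h1c : ContinuousOn x1 (Set.Icc t0 T))
    (h2c : ContinuousOn x2 (Set.Icc t0 T))
    (h1m : ∀ t ∈ Set.Icc t0 T, x1 t ∈ Set.Icc (-L) L)
    (h2m : ∀ t ∈ Set.Icc t0 T, x2 t ∈ Set.Icc (-L) L)
    (h1e : ∀ t ∈ Set.Icc t0 T,
      x1 t = x0 + ABIntegral t0 b θ μ γ (fun s => r * x1 s * (1 - x1 s)) t)
    (h2e : ∀ t ∈ Set.Icc t0 T,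
      x2 t = x0 + ABIntegral t0 b θ μ γ (fun s => r * x2 s * (1 - x2 s)) t) :
    ∀ t ∈ Set.Icc t0 T, x1 t = x2 t :=
  eqOn_of_eq_add_ABIntegral htT.le hθ0 hθ1 hμ1 hb (lipschitzOnWith_logistic hr.le hL.le) hC1
    h1c h2c h1m h2m h1e h2e

/-- Uniqueness for the generalized ABC quadratic logistic model. -/
theorem quadratic_logistic_uniqueness
    (t0 T θ μ γ b r L x0 : ℝ) (htT : t0 < T) (hθ0 : 0 < θ) (hθ1 : θ < 1)
    (hμ0 : 0 < μ) (hμ1 : μ < 1) (hγ : 0 < γ) (hb : 0 < b) (hr : 0 < r) (hL : 0 < L)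
    (hx0 : |x0| ≤ L)
    (hC1 : C1const t0 T b θ μ γ (r * (1 + 2 * L)) < 1)
    (x1 x2 : ℝ → ℝ)
    (h1c : ContinuousOn x1 (Set.Icc t0 T))
    (h2c : ContinuousOn x2 (Set.Icc t0 T))
    (h1m : ∀ t ∈ Set.Icc t0 T, x1 t ∈ Set.Icc (-L) L)
    (h2m : ∀ t ∈ Set.Icc t0 T, x2 t ∈ Set.Icc (-L) L)
    (h1e : ∀ t ∈ Set.Icc t0 T,
      x1 t = x0 + ABIntegral t0 b θ μ γ (fun s => r * x1 s * (1 - x1 s)) t)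
    (h2e : ∀ t ∈ Set.Icc t0 T,
      x2 t = x0 + ABIntegral t0 b θ μ γ (fun s => r * x2 s * (1 - x2 s)) t) :
    ∀ t ∈ Set.Icc t0 T, x1 t = x2 t :=
  quadratic_logistic_uniqueness_general t0 T θ μ γ b r L x0 htT hθ0 hθ1 hμ1 hb hr hL hC1 x1 x2 h1c
    h2c h1m h2m h1e h2e
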